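/- In an NIP theory, if a type p ∈ S(B) Lascar-splits over A ⊆ B, then p forks over A. -/

import Mathlib

open FirstOrder Cardinal

universe u

variable {L : FirstOrder.Language.{u, u}} {M : Type u} [L.Structure M]

/-- A formula in `m` free variables together with a tuple of parameters from `M`. -/
structure PFormula (L : FirstOrder.Language.{u, u}) (M : Type u) [L.Structure M] (m : ℕ) where
  n : ℕ
  toFormula : L.Formula (Fin m ⊕ Fin n)
  par : Fin n → M

namespace PFormula

variable {m : ℕ}

/-- Realization of a parametrized formula by an `m`-tuple. -/
def Realize (ψ : PFormula L M m) (a : Fin m → M) : Prop :=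
  ψ.toFormula.Realize (Sum.elim a ψ.par)

/-- Realization of a parametrized formula in one variable by an element. -/
def Realize1 (ψ : PFormula L M 1) (a : M) : Prop :=
  ψ.Realize fun _ => a

/-- Negation of a parametrized formula. -/
def not (ψ : PFormula L M m) : PFormula L M m :=
  ⟨ψ.n, ψ.toFormula.not, ψ.par⟩

/-- The parameters of `ψ` all lie in `B`. -/
def Over (ψ : PFormula L M m) (B : Set M) : Prop :=
  ∀ i, ψ.par i ∈ B

end PFormula

/-- Two tuples have the same type over the parameter set `A`. -/
def SameTypeOver (L : FirstOrder.Language.{u, u}) {M : Type u} [L.Structure M]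
    (A : Set M) {γ : Type} (b c : γ → M) : Prop :=
  ∀ (k : ℕ) (φ : L.Formula (γ ⊕ Fin k)) (a : Fin k → M),
    (∀ i, a i ∈ A) → (φ.Realize (Sum.elim b a) ↔ φ.Realize (Sum.elim c a))

/-- A sequence of `d`-tuples, indexed by a linear order, is indiscernible over `A`. -/
def IndiscTupleSeqOver (L : FirstOrder.Language.{u, u}) {M : Type u} [L.Structure M]
    (A : Set M) {ι : Type*} [LinearOrder ι] {d : ℕ} (f : ι → Fin d → M) : Prop :=
  ∀ (n : ℕ) (s t : Fin n → ι), StrictMono s → StrictMono t →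
    SameTypeOver L A (fun q : Fin n × Fin d => f (s q.1) q.2)
      (fun q : Fin n × Fin d => f (t q.1) q.2)

/-- A sequence of elements, indexed by a linear order, is indiscernible over `A`. -/
def IndiscSeqOver (L : FirstOrder.Language.{u, u}) {M : Type u} [L.Structure M]
    (A : Set M) {ι : Type*} [LinearOrder ι] (f : ι → M) : Prop :=
  ∀ (n : ℕ) (s t : Fin n → ι), StrictMono s → StrictMono t →
    SameTypeOver L A (fun i => f (s i)) (fun i => f (t i))

/-- A family of elements is an indiscernible *set* over `A`: the type of a tuple of
distinct elements depends only on its length. -/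
def IndiscSetOver (L : FirstOrder.Language.{u, u}) {M : Type u} [L.Structure M]
    (A : Set M) {ι : Type*} (f : ι → M) : Prop :=
  ∀ (n : ℕ) (s t : Fin n → ι), Function.Injective s → Function.Injective t →
    SameTypeOver L A (fun i => f (s i)) (fun i => f (t i))

/-- `p` is a complete consistent `m`-type over `B`: all parameters come from `B`, for each
formula over `B` it contains the formula or its negation, and every finite subset is
realized (in the monster). -/
def IsTypeOver {m : ℕ} (p : Set (PFormula L M m)) (B : Set M) : Prop :=
  (∀ ψ ∈ p, ψ.Over B) ∧
  (∀ ψ : PFormula L M m, ψ.Over B → ψ ∈ p ∨ ψ.not ∈ p) ∧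
  (∀ s : Finset (PFormula L M m), ↑s ⊆ p → ∃ a : Fin m → M, ∀ ψ ∈ s, ψ.Realize a)

/-- `p` is finitely satisfiable in `A`: every finite subset of `p` is realized by a tuple
from `A`. -/
def FinSatIn {m : ℕ} (p : Set (PFormula L M m)) (A : Set M) : Prop :=
  ∀ s : Finset (PFormula L M m), ↑s ⊆ p →
    ∃ a : Fin m → M, (∀ i, a i ∈ A) ∧ ∀ ψ ∈ s, ψ.Realize a

/-- The complete type of an element `a` over the set `C`. -/
def tpOver (L : FirstOrder.Language.{u, u}) {M : Type u} [L.Structure M]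
    (a : M) (C : Set M) : Set (PFormula L M 1) :=
  {ψ | ψ.Over C ∧ ψ.Realize1 a}

/-- `p` (a type with parameters in `B`) does not split over `A`. -/
def DoesNotSplitOver {m : ℕ} (p : Set (PFormula L M m)) (B A : Set M) : Prop :=
  ∀ (n : ℕ) (b c : Fin n → M) (φ : L.Formula (Fin m ⊕ Fin n)),
    (∀ i, b i ∈ B) → (∀ i, c i ∈ B) → SameTypeOver L A b c →
    ((⟨n, φ, b⟩ : PFormula L M m) ∈ p ↔ (⟨n, φ, c⟩ : PFormula L M m) ∈ p)

/-- `p` (a type over `B`) is definable over `A`. -/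
def DefinableOver {m : ℕ} (p : Set (PFormula L M m)) (B A : Set M) : Prop :=
  ∀ (n : ℕ) (φ : L.Formula (Fin m ⊕ Fin n)),
    ∃ (k : ℕ) (d : L.Formula (Fin n ⊕ Fin k)) (e : Fin k → M), (∀ i, e i ∈ A) ∧
      ∀ b : Fin n → M, (∀ i, b i ∈ B) →
        ((⟨n, φ, b⟩ : PFormula L M m) ∈ p ↔ d.Realize (Sum.elim b e))

/-- The parametrized formula `ψ` divides over `A`. -/
def PFormula.Divides {m : ℕ} (ψ : PFormula L M m) (A : Set M) : Prop :=
  ∃ (f : ℕ → Fin ψ.n → M) (k : ℕ), 0 < k ∧ f 0 = ψ.par ∧ IndiscTupleSeqOver L A f ∧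
    ∀ s : Finset ℕ, s.card = k →
      ¬ ∃ a : Fin m → M, ∀ i ∈ s, ψ.toFormula.Realize (Sum.elim a (f i))

/-- The (partial) type `p` forks over `A`: some finite subset of `p` implies a finite
disjunction of formulas each of which divides over `A`. -/
def ForksOver {m : ℕ} (p : Set (PFormula L M m)) (A : Set M) : Prop :=
  ∃ (r : ℕ) (ψs : Fin r → PFormula L M m), (∀ j, (ψs j).Divides A) ∧
    ∃ s : Finset (PFormula L M m), ↑s ⊆ p ∧
      ∀ a : Fin m → M, (∀ χ ∈ s, χ.Realize a) → ∃ j, (ψs j).Realize a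

/-- `p` splits strongly over `A`. -/
def SplitsStronglyOver {m : ℕ} (p : Set (PFormula L M m)) (A : Set M) : Prop :=
  ∃ (n : ℕ) (f : ℕ → Fin n → M) (φ : L.Formula (Fin m ⊕ Fin n)),
    IndiscTupleSeqOver L A f ∧
    (⟨n, φ, f 0⟩ : PFormula L M m) ∈ p ∧ (PFormula.not ⟨n, φ, f 1⟩ : PFormula L M m) ∈ p

/-- Two tuples are of Lascar distance one over `A`: they lie on a common
`A`-indiscernible sequence. -/
def LascarDistOne (L : FirstOrder.Language.{u, u}) {M : Type u} [L.Structure M]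
    (A : Set M) {n : ℕ} (b c : Fin n → M) : Prop :=
  ∃ f : ℕ → Fin n → M, IndiscTupleSeqOver L A f ∧ ∃ i j : ℕ, f i = b ∧ f j = c

/-- Two tuples have the same Lascar strong type over `A` (finite Lascar distance). -/
def SameLstp (L : FirstOrder.Language.{u, u}) {M : Type u} [L.Structure M]
    (A : Set M) {n : ℕ} (b c : Fin n → M) : Prop :=
  Relation.ReflTransGen (fun x y => LascarDistOne L A x y) b c

/-- `p` (a type over `B`) Lascar-splits over `A`. -/
def LascarSplitsOver {m : ℕ} (p : Set (PFormula L M m)) (B A : Set M) : Prop :=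
  ∃ (n : ℕ) (b c : Fin n → M) (φ : L.Formula (Fin m ⊕ Fin n)),
    (∀ i, b i ∈ B) ∧ (∀ i, c i ∈ B) ∧ SameLstp L A b c ∧
    (⟨n, φ, b⟩ : PFormula L M m) ∈ p ∧ (PFormula.not ⟨n, φ, c⟩ : PFormula L M m) ∈ p

/-- The structure `M` is NIP ("dependent"): no formula alternates infinitely often on an
indiscernible sequence. -/
def IsNIP (L : FirstOrder.Language.{u, u}) (M : Type u) [L.Structure M] : Prop :=
  ∀ (d k : ℕ) (φ : L.Formula (Fin d ⊕ Fin k)) (f : ℕ → Fin d → M) (c : Fin k → M),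
    IndiscTupleSeqOver L (∅ : Set M) f →
    ¬ ({i : ℕ | φ.Realize (Sum.elim (f i) c)}.Infinite ∧
        {i : ℕ | ¬ φ.Realize (Sum.elim (f i) c)}.Infinite)

/-- The subset `N` of the monster is `κ`-saturated: every type over a subset of `N` of
size `< κ` which is finitely satisfiable is realized inside `N`. -/
def SetSaturated (L : FirstOrder.Language.{u, u}) {M : Type u} [L.Structure M]
    (N : Set M) (κ : Cardinal.{u}) : Prop :=
  ∀ C : Set M, C ⊆ N → #C < κ → ∀ (m : ℕ) (p : Set (PFormula L M m)),
    (∀ ψ ∈ p, ψ.Over C) →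
    (∀ s : Finset (PFormula L M m), ↑s ⊆ p → ∃ a : Fin m → M, ∀ ψ ∈ s, ψ.Realize a) →
    ∃ a : Fin m → M, (∀ i, a i ∈ N) ∧ ∀ ψ ∈ p, ψ.Realize a

/-- `M` is a monster model: it is saturated in every cardinality below `#M`. -/
def IsMonster (L : FirstOrder.Language.{u, u}) (M : Type u) [L.Structure M] : Prop :=
  ∀ κ : Cardinal.{u}, κ < #M → SetSaturated L (Set.univ : Set M) κ

/-- The average type of an `ω`-indexed indiscernible set over `C`: formulas over `C` true
of all but finitely many elements of the set. -/
def AvSet (L : FirstOrder.Language.{u, u}) {M : Type u} [L.Structure M]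
    (f : ℕ → M) (C : Set M) : Set (PFormula L M 1) :=
  {ψ | ψ.Over C ∧ {i : ℕ | ¬ ψ.Realize1 (f i)}.Finite}

/-- The average type of an endless indiscernible sequence over `C`: formulas over `C`
true of all sufficiently late elements of the sequence. -/
def AvSeq (L : FirstOrder.Language.{u, u}) {M : Type u} [L.Structure M]
    {ι : Type*} [LinearOrder ι] (f : ι → M) (C : Set M) : Set (PFormula L M 1) :=
  {ψ | ψ.Over C ∧ ∃ i₀ : ι, ∀ i ≥ i₀, ψ.Realize1 (f i)}

/-- The algebraic closure of `A` in `M`. -/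
def aclSet (L : FirstOrder.Language.{u, u}) {M : Type u} [L.Structure M]
    (A : Set M) : Set M :=
  {a | ∃ ψ : PFormula L M 1, ψ.Over A ∧ ψ.Realize1 a ∧ {x : M | ψ.Realize1 x}.Finite}

/-- `p ∈ S(A)` is generically stable: there is a nonforking sequence of realizations of
`p` over `A` which is an indiscernible set. -/
def GenericallyStable (p : Set (PFormula L M 1)) (A : Set M) : Prop :=
  ∃ f : ℕ → M,
    (∀ i, ∀ ψ ∈ p, ψ.Realize1 (f i)) ∧
    IndiscSetOver L A f ∧
    ∀ i : ℕ, ¬ ForksOver (tpOver L (f i) (A ∪ f '' {j | j < i})) A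

/-- The Boolean algebra of `B`-definable subsets of `A^m`. -/
def DefSub (L : FirstOrder.Language.{u, u}) {M : Type u} [L.Structure M]
    (A B : Set M) (m : ℕ) : Set (Set (Fin m → M)) :=
  {S | ∃ ψ : PFormula L M m, ψ.Over B ∧ S = {a | (∀ i, a i ∈ A) ∧ ψ.Realize a}}

/-- An ultrafilter on the Boolean algebra of `B`-definable subsets of `A^m`. -/
structure UltraOn (L : FirstOrder.Language.{u, u}) {M : Type u} [L.Structure M]
    (A B : Set M) (m : ℕ) where
  sets : Set (Set (Fin m → M))
  subset_def : sets ⊆ DefSub L A B m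
  inter_mem : ∀ S ∈ sets, ∀ T ∈ sets, S ∩ T ∈ sets
  superset_mem : ∀ S ∈ sets, ∀ T ∈ DefSub L A B m, S ⊆ T → T ∈ sets
  nonempty_mem : ∀ S ∈ sets, S.Nonempty
  ultra : ∀ S ∈ DefSub L A B m,
    S ∈ sets ∨ ({a : Fin m → M | ∀ i, a i ∈ A} \ S) ∈ sets

/-- The average type of an ultrafilter on `Def_m(A,B)` over `B`. -/
def AvU {A B : Set M} {m : ℕ} (U : UltraOn L A B m) : Set (PFormula L M m) :=
  {ψ | ψ.Over B ∧ {a : Fin m → M | (∀ i, a i ∈ A) ∧ ψ.Realize a} ∈ U.sets}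

/-!
A chain `b = x₀, x₁, …, x_N = c` of tuples at Lascar distance one turns `φ(x, b) ∧ ¬φ(x, c)` into
the disjunction of the formulas `φ(x, xᵢ) ∧ ¬φ(x, xᵢ₊₁)`, so it suffices that each of these
divides over `A`. If `u, v` lie on an `A`-indiscernible sequence `f`, we may take them to be
`f 0, f 1` in some order; the pairs `(f (2t), f (2t+1))` are again `A`-indiscernible, and
`φ(x, u) ∧ ¬φ(x, v)` divides along them unless all finite initial segments are consistent. In
that case `φ` alternates arbitrarily often along `f`, and compactness in the monster model yields
an indiscernible sequence along which a single tuple alternates infinitely often, contradicting NIP.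
-/

open FirstOrder.Language

theorem Relation.ReflTransGen.exists_crossing_steps {α : Type*} {r : α → α → Prop} {b c : α}
    (h : Relation.ReflTransGen r b c) :
    ∃ l : List (α × α), (∀ e ∈ l, r e.1 e.2) ∧
      ∀ P : α → Prop, P b → ¬ P c → ∃ e ∈ l, P e.1 ∧ ¬ P e.2 := by
  induction h with
  | refl => exact ⟨[], by simp, fun P hb hc => (hc hb).elim⟩
  | @tail c' d _ hc'd ih =>
    obtain ⟨l, hl, hcross⟩ := ih
    refine ⟨(c', d) :: l, by simpa [hc'd] using hl, fun P hb hd => ?_⟩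
    by_cases hc' : P c'
    · exact ⟨_, List.mem_cons_self, hc', hd⟩
    · obtain ⟨e, he, hPe⟩ := hcross P hb hc'
      exact ⟨e, List.mem_cons_of_mem _ he, hPe⟩

theorem exists_seq_of_forall_snoc {β : Type*} {P : ∀ t, (Fin t → β) → Prop} (h0 : P 0 Fin.elim0)
    (hstep : ∀ t v, P t v → ∃ y, P (t + 1) (Fin.snoc v y)) :
    ∃ H : ℕ → β, ∀ t, P t fun i : Fin t => H i := by
  choose next hnext using hstep
  let g : ∀ t, {v // P t v} := fun t =>
    Nat.rec ⟨Fin.elim0, h0⟩ (fun t v => ⟨_, hnext t v.1 v.2⟩) t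
  let H t := next t (g t).1 (g t).2
  have hg : ∀ t, (g t).1 = fun i : Fin t => H i := by
    intro t
    induction t with
    | zero => funext i; exact i.elim0
    | succ t ih =>
      funext i
      change Fin.snoc (α := fun _ => β) (g t).1 (H t) i = H i
      induction i using Fin.lastCases with
      | last => simp
      | cast i => simp [ih]
  exact ⟨H, fun t => hg t ▸ (g t).2⟩

namespace PFormula

variable {m : ℕ}

noncomputable def exs {γ δ : Type} [Finite γ] [Finite δ] (Φ : L.Formula (Fin m ⊕ γ ⊕ δ))
    (c : γ → M) : PFormula L M m :=
  ⟨Nat.card γ,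
    (Φ.relabel (Sum.elim (Sum.inl ∘ Sum.inl)
      (Sum.elim (Sum.inl ∘ Sum.inr ∘ Finite.equivFin γ) Sum.inr))).iExs δ,
    c ∘ (Finite.equivFin γ).symm⟩

theorem realize_exs {γ δ : Type} [Finite γ] [Finite δ] {Φ : L.Formula (Fin m ⊕ γ ⊕ δ)}
    {c : γ → M} {x : Fin m → M} :
    (exs Φ c).Realize x ↔ ∃ h : δ → M, Φ.Realize (Sum.elim x (Sum.elim c h)) := by
  simp only [Realize, exs, Formula.realize_iExs, Formula.realize_relabel]
  refine exists_congr fun h => iff_of_eq (congrArg _ ?_)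
  funext v
  rcases v with _ | _ | _ <;> simp

theorem exs_over {γ δ : Type} [Finite γ] [Finite δ] (Φ : L.Formula (Fin m ⊕ γ ⊕ δ))
    {c : γ → M} {C : Set M} (hc : ∀ g, c g ∈ C) : (exs Φ c).Over C :=
  fun _ => hc _

end PFormula

theorem IsMonster.exists_realize_of_directed (hM : IsMonster L M) {m : ℕ} {C : Set M}
    (hC : C.Finite) {ι : Type*} [Nonempty ι] {θ : ι → PFormula L M m} (hθC : ∀ i, (θ i).Over C)
    (hdir : Directed (· ⊇ ·) fun i => {a | (θ i).Realize a}) (hsat : ∀ i, ∃ a, (θ i).Realize a) :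
    ∃ a, ∀ i, (θ i).Realize a := by
  rcases finite_or_infinite M with hfin | hinf
  · -- in a finite structure, a realization set of least size lies inside all the others
    let S i := {a | (θ i).Realize a}
    let i₀ := Function.argmin fun i => (S i).ncard
    obtain ⟨a, ha⟩ := hsat i₀
    refine ⟨a, fun i => ?_⟩
    obtain ⟨j, hji₀, hji⟩ := hdir i₀ i
    have hj : S j = S i₀ :=
      Set.eq_of_subset_of_ncard_le hji₀ (Function.argmin_le (fun i => (S i).ncard) j)
    exact hji (show a ∈ S j from hj ▸ ha)
  · have hκ : Order.succ #C < #M :=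
      (Cardinal.isSuccLimit_aleph0.succ_lt hC.lt_aleph0).trans_le (Cardinal.aleph0_le_mk M)
    have hfs : ∀ s : Finset (PFormula L M m), ↑s ⊆ Set.range θ →
        ∃ a, ∀ ψ ∈ s, ψ.Realize a := by
      classical
      intro s hs
      obtain ⟨s', -, rfl⟩ := Finset.subset_set_image_iff.1 (Set.image_univ.symm ▸ hs)
      obtain ⟨k, hk⟩ := hdir.finset_le s'
      obtain ⟨a, ha⟩ := hsat k
      exact ⟨a, by simpa using fun i hi => hk i hi ha⟩
    obtain ⟨a, -, ha⟩ := hM _ hκ C (Set.subset_univ C) (Order.lt_succ _) m (Set.range θ)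
      (by rintro _ ⟨i, rfl⟩; exact hθC i) hfs
    exact ⟨a, fun i => ha _ ⟨i, rfl⟩⟩

section Indiscernibles

variable {A : Set M}

theorem SameTypeOver.comp {γ δ : Type} {b c : γ → M} (h : SameTypeOver L A b c) (e : δ → γ) :
    SameTypeOver L A (b ∘ e) (c ∘ e) := by
  intro k φ a ha
  simpa only [Formula.realize_relabel, Sum.elim_comp_map, Function.comp_id] using
    h k (φ.relabel (Sum.map e id)) a ha

theorem SameTypeOver.mono {A' : Set M} {γ : Type} {b c : γ → M} (h : SameTypeOver L A b c)
    (hA' : A' ⊆ A) : SameTypeOver L A' b c :=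
  fun k φ a ha => h k φ a fun i => hA' (ha i)

theorem sameTypeOver_empty_iff {γ : Type} {b c : γ → M} :
    SameTypeOver L ∅ b c ↔ ∀ φ : L.Formula γ, φ.Realize b ↔ φ.Realize c := by
  refine ⟨fun h φ => ?_, fun h k φ a ha => ?_⟩
  · simpa only [Formula.realize_relabel, Sum.elim_comp_inl] using
      h 0 (φ.relabel Sum.inl) Fin.elim0 finZeroElim
  · have hba : ∀ b : γ → M, b ∘ Sum.elim id (fun i => (ha i).elim) = Sum.elim b a := by
      intro b
      funext x
      rcases x with x | i
      · rfl
      · exact (ha i).elim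
    simpa only [Formula.realize_relabel, hba] using h (φ.relabel (Sum.elim id fun i => (ha i).elim))

variable {d : ℕ} {f : ℕ → Fin d → M}

theorem IndiscTupleSeqOver.mono {A' : Set M} (hf : IndiscTupleSeqOver L A f) (hA' : A' ⊆ A) :
    IndiscTupleSeqOver L A' f :=
  fun n s t hs ht => (hf n s t hs ht).mono hA'

theorem IndiscTupleSeqOver.comp_strictMono (hf : IndiscTupleSeqOver L A f) {τ : ℕ → ℕ}
    (hτ : StrictMono τ) : IndiscTupleSeqOver L A (f ∘ τ) :=
  fun n s t hs ht => hf n (τ ∘ s) (τ ∘ t) (hτ.comp hs) (hτ.comp ht)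

theorem indiscTupleSeqOver_const (w : Fin d → M) : IndiscTupleSeqOver L A fun _ : ℕ => w :=
  fun _ _ _ _ _ _ _ _ _ => Iff.rfl

theorem IndiscTupleSeqOver.sameTypeOver_of_strictMono (hf : IndiscTupleSeqOver L A f)
    {κ : Type} [Fintype κ] [LinearOrder κ] {s t : κ → ℕ} (hs : StrictMono s) (ht : StrictMono t) :
    SameTypeOver L A (fun q : κ × Fin d => f (s q.1) q.2) fun q => f (t q.1) q.2 := by
  let e := Fintype.orderIsoFinOfCardEq κ rfl
  simpa [Function.comp_def] using
    (hf _ (s ∘ e) (t ∘ e) (hs.comp e.strictMono) (ht.comp e.strictMono)).comp (Prod.map e.symm id)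

theorem IndiscTupleSeqOver.blocks (hf : IndiscTupleSeqOver L A f) {D n : ℕ}
    (c : Fin n → Fin D × Fin d) :
    IndiscTupleSeqOver L A fun t j => f (D * t + (c j).1) (c j).2 := by
  have hlex : ∀ {κ : ℕ} {s : Fin κ → ℕ}, StrictMono s →
      StrictMono fun p : Lex (Fin κ × Fin D) => D * s (ofLex p).1 + (ofLex p).2 := by
    intro κ s hs p p' hpp'
    rcases Prod.Lex.lt_iff.1 hpp' with h | ⟨h, h'⟩
    · dsimp only
      have hD : D * s (ofLex p).1 + D ≤ D * s (ofLex p').1 := by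
        simpa [Nat.mul_succ] using Nat.mul_le_mul_left D (hs h)
      have := (ofLex p).2.isLt
      omega
    · dsimp only
      rw [h]
      exact Nat.add_lt_add_left h' _
  intro κ s t hs ht
  exact (hf.sameTypeOver_of_strictMono (hlex hs) (hlex ht)).comp
    fun q : Fin κ × Fin n => (toLex (q.1, (c q.2).1), (c q.2).2)

theorem IndiscTupleSeqOver.of_forall_realize {H : ℕ → Fin d → M}
    (hf : IndiscTupleSeqOver L ∅ f)
    (hfH : ∀ (K : ℕ) (χ : L.Formula (Fin K × Fin d)),
      χ.Realize (fun q => f q.1 q.2) → χ.Realize fun q => H q.1 q.2) :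
    IndiscTupleSeqOver L ∅ H := by
  intro n s t hs ht
  refine sameTypeOver_empty_iff.2 fun φ => ?_
  obtain ⟨K, hK⟩ := Finite.exists_le fun i => max (s i) (t i)
  let s' : Fin n → Fin (K + 1) := fun i => ⟨s i, by have := hK i; omega⟩
  let t' : Fin n → Fin (K + 1) := fun i => ⟨t i, by have := hK i; omega⟩
  have := hfH (K + 1) ((φ.relabel (Prod.map s' id)).iff (φ.relabel (Prod.map t' id)))
  simp only [Formula.realize_iff, Formula.realize_relabel] at this
  exact this (sameTypeOver_empty_iff.1 (hf n s t hs ht) φ)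

end Indiscernibles

namespace PFormula

variable {m n : ℕ} {A : Set M}

theorem divides_of_indiscernible {g : ℕ → Fin n → M} (hg : IndiscTupleSeqOver L A g)
    (θ : L.Formula (Fin m ⊕ Fin n)) {k : ℕ} (hk : 0 < k)
    (hinc : ¬ ∃ a : Fin m → M, ∀ i < k, θ.Realize (Sum.elim a (g i))) :
    (⟨n, θ, g 0⟩ : PFormula L M m).Divides A := by
  refine ⟨g, k, hk, rfl, hg, fun s hs ⟨a, ha⟩ => hinc ?_⟩
  -- `∃ x, ⋀_{q < k} θ(x, y_q)`, moved by indiscernibility from the positions in `s` to `0, …, k-1`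
  let Ξ : L.Formula (Fin k × Fin n) :=
    (Formula.iInf fun q : Fin k =>
      θ.relabel (Sum.elim Sum.inr fun j => Sum.inl (q, j))).iExs (Fin m)
  have hΞ : ∀ w : Fin k → ℕ, Ξ.Realize (fun p => g (w p.1) p.2) ↔
      ∃ a : Fin m → M, ∀ q, θ.Realize (Sum.elim a (g (w q))) := by
    intro w
    simp only [Ξ, Formula.realize_iExs, Formula.realize_iInf, Formula.realize_relabel]
    refine exists_congr fun a => forall_congr' fun q => iff_of_eq (congrArg _ ?_)
    funext x
    rcases x with _ | _ <;> rfl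
  let O := s.orderIsoOfFin hs
  have hsame := sameTypeOver_empty_iff.1 ((hg k (fun q => O q) (fun q => q)
    (fun _ _ h => O.strictMono h) Fin.val_strictMono).mono (Set.empty_subset A)) Ξ
  obtain ⟨a', ha'⟩ := (hΞ _).1 (hsame.1 ((hΞ _).2 ⟨a, fun q => ha _ (O q).2⟩))
  exact ⟨a', fun i hi => ha' ⟨i, hi⟩⟩

def splittingFormula (φ : L.Formula (Fin m ⊕ Fin n)) : L.Formula (Fin m ⊕ Fin (n + n)) :=
  φ.relabel (Sum.map id (Fin.castAdd n)) ⊓ ∼(φ.relabel (Sum.map id (Fin.natAdd n)))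

theorem realize_splittingFormula {φ : L.Formula (Fin m ⊕ Fin n)} {u v : Fin n → M}
    {a : Fin m → M} :
    (splittingFormula φ).Realize (Sum.elim a (Fin.append u v)) ↔
      φ.Realize (Sum.elim a u) ∧ ¬ φ.Realize (Sum.elim a v) := by
  simp only [splittingFormula, Formula.realize_inf, Formula.realize_not, Formula.realize_relabel,
    Sum.elim_comp_map, Function.comp_id]
  have hu : Fin.append u v ∘ Fin.castAdd n = u := funext (Fin.append_left u v)
  have hv : Fin.append u v ∘ Fin.natAdd n = v := funext (Fin.append_right u v)
  rw [hu, hv]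

def splitting (φ : L.Formula (Fin m ⊕ Fin n)) (u v : Fin n → M) : PFormula L M m :=
  ⟨n + n, splittingFormula φ, Fin.append u v⟩

theorem realize_splitting {φ : L.Formula (Fin m ⊕ Fin n)} {u v : Fin n → M} {a : Fin m → M} :
    (splitting φ u v).Realize a ↔ φ.Realize (Sum.elim a u) ∧ ¬ φ.Realize (Sum.elim a v) :=
  realize_splittingFormula

end PFormula

theorem exists_strictMono_zero_one {i j : ℕ} (hij : i < j) :
    ∃ τ : ℕ → ℕ, StrictMono τ ∧ τ 0 = i ∧ τ 1 = j := by
  refine ⟨fun k => if k = 0 then i else j + (k - 1),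
    strictMono_nat_of_lt_succ fun k => ?_, rfl, rfl⟩
  rcases k with _ | k <;> simp; omega

theorem LascarDistOne.eq_or_exists_zero_one {A : Set M} {n : ℕ} {b c : Fin n → M}
    (h : LascarDistOne L A b c) :
    b = c ∨ ∃ f : ℕ → Fin n → M, IndiscTupleSeqOver L A f ∧
      (f 0 = b ∧ f 1 = c ∨ f 0 = c ∧ f 1 = b) := by
  obtain ⟨f, hf, i, j, rfl, rfl⟩ := h
  rcases lt_trichotomy i j with hij | rfl | hji
  · obtain ⟨τ, hτ, h0, h1⟩ := exists_strictMono_zero_one hij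
    exact .inr ⟨f ∘ τ, hf.comp_strictMono hτ, .inl ⟨by simp [h0], by simp [h1]⟩⟩
  · exact .inl rfl
  · obtain ⟨τ, hτ, h0, h1⟩ := exists_strictMono_zero_one hji
    exact .inr ⟨f ∘ τ, hf.comp_strictMono hτ, .inr ⟨by simp [h0], by simp [h1]⟩⟩

section Alternation

variable {m d : ℕ} (ψ : L.Formula (Fin m ⊕ Fin d))

def IsAlternating (a : Fin m → M) {K : ℕ} (H : Fin K → Fin d → M) : Prop :=
  ∀ i : Fin K, ψ.Realize (Sum.elim a (H i)) ↔ Even (i : ℕ)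

variable {ψ} in
theorem IsAlternating.comp_castLE {a : Fin m → M} {K K' : ℕ} {H : Fin K → Fin d → M}
    (hH : IsAlternating ψ a H) (h : K' ≤ K) : IsAlternating ψ a (H ∘ Fin.castLE h) :=
  fun i => hH (Fin.castLE h i)

noncomputable def alternatingAnd {K : ℕ} (χ : L.Formula (Fin K × Fin d)) :
    L.Formula (Fin m ⊕ (Fin K × Fin d)) :=
  Formula.iInf (fun i : Fin K =>
      if Even (i : ℕ) then ψ.relabel (Sum.map id fun j => (i, j))
      else ∼(ψ.relabel (Sum.map id fun j => (i, j)))) ⊓ χ.relabel Sum.inr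

variable {ψ} in
theorem realize_alternatingAnd {K : ℕ} {χ : L.Formula (Fin K × Fin d)} {a : Fin m → M}
    {H : Fin K → Fin d → M} :
    (alternatingAnd ψ χ).Realize (Sum.elim a fun q => H q.1 q.2) ↔
      IsAlternating ψ a H ∧ χ.Realize fun q => H q.1 q.2 := by
  simp only [alternatingAnd, Formula.realize_inf, Formula.realize_iInf, Formula.realize_relabel,
    Sum.elim_comp_inr]
  refine and_congr_left' (forall_congr' fun i => ?_)
  have hi : (Sum.elim a fun q => H q.1 q.2) ∘ Sum.map id (fun j => (i, j)) = Sum.elim a (H i) := by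
    funext x
    rcases x with _ | _ <;> rfl
  split_ifs with he <;> simp [Formula.realize_relabel, hi, he]

noncomputable def existsAlternating {K : ℕ} (χ : L.Formula (Fin K × Fin d)) : PFormula L M m :=
  PFormula.exs ((alternatingAnd ψ χ).relabel (Sum.map id Sum.inr)) (Fin.elim0 : Fin 0 → M)

variable {ψ} in
theorem realize_existsAlternating {K : ℕ} {χ : L.Formula (Fin K × Fin d)} {a : Fin m → M} :
    (existsAlternating ψ χ).Realize a ↔
      ∃ H : Fin K → Fin d → M, IsAlternating ψ a H ∧ χ.Realize fun q => H q.1 q.2 := by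
  simp only [existsAlternating, PFormula.realize_exs, Formula.realize_relabel, Sum.elim_comp_map,
    Function.comp_id, Sum.elim_comp_inr]
  exact ⟨fun ⟨h, hh⟩ => ⟨fun i j => h (i, j), realize_alternatingAnd.1 hh⟩,
    fun ⟨H, hH⟩ => ⟨fun q => H q.1 q.2, realize_alternatingAnd.2 hH⟩⟩

/-- The roles of the coordinates `(i, j)` of `H` in `existsAlternatingSnoc`: a parameter for
`i < t`, the free variable for `i = t`, and a bound variable for `i > t`. -/
def snocVars (t K : ℕ) :
    Fin m ⊕ (Fin K × Fin d) → Fin d ⊕ ((Fin m ⊕ Fin t × Fin d) ⊕ Fin K × Fin d) :=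
  Sum.elim (fun i => .inr (.inl (.inl i))) fun q =>
    if h : (q.1 : ℕ) < t then .inr (.inl (.inr (⟨q.1, h⟩, q.2)))
    else if (q.1 : ℕ) = t then .inl q.2 else .inr (.inr q)

noncomputable def existsAlternatingSnoc {K : ℕ} (χ : L.Formula (Fin K × Fin d)) (a : Fin m → M)
    {t : ℕ} (v : Fin t → Fin d → M) : PFormula L M d :=
  PFormula.exs ((alternatingAnd ψ χ).relabel (snocVars t K)) (Sum.elim a fun p => v p.1 p.2)

variable {ψ} in
theorem realize_existsAlternatingSnoc {K t : ℕ} (hK : t + 1 ≤ K) {χ : L.Formula (Fin K × Fin d)}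
    {a : Fin m → M} {v : Fin t → Fin d → M} {y : Fin d → M} :
    (existsAlternatingSnoc ψ χ a v).Realize y ↔
      ∃ H : Fin K → Fin d → M, H ∘ Fin.castLE hK = Fin.snoc v y ∧
        IsAlternating ψ a H ∧ χ.Realize fun q => H q.1 q.2 := by
  let glue (h : Fin K × Fin d → M) : Fin K → Fin d → M := fun i j =>
    if hi : (i : ℕ) < t then v ⟨i, hi⟩ j else if (i : ℕ) = t then y j else h (i, j)
  have hglue : ∀ h, Sum.elim y (Sum.elim (Sum.elim a fun p => v p.1 p.2) h) ∘ snocVars t K =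
      Sum.elim a fun q => glue h q.1 q.2 := by
    intro h
    funext x
    rcases x with i | ⟨i, j⟩
    · rfl
    · simp only [snocVars, glue, Function.comp_apply, Sum.elim_inr]
      split_ifs <;> rfl
  have hglue_snoc : ∀ h, glue h ∘ Fin.castLE hK = Fin.snoc v y := by
    intro h
    funext i
    induction i using Fin.lastCases with
    | last => funext j; simp [glue]
    | cast i => funext j; simp [glue]
  have hglue_eq : ∀ H : Fin K → Fin d → M, H ∘ Fin.castLE hK = Fin.snoc v y →
      glue (fun q => H q.1 q.2) = H := by
    intro H hH
    funext i j
    simp only [glue]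
    split_ifs with hi hit
    · have := congrFun (congrFun hH (Fin.castSucc ⟨i, hi⟩)) j
      rw [Function.comp_apply, Fin.snoc_castSucc] at this
      rw [← this]
      rfl
    · have := congrFun (congrFun hH (Fin.last t)) j
      rw [Function.comp_apply, Fin.snoc_last] at this
      rw [← this, show Fin.castLE hK (Fin.last t) = i from Fin.ext (by simp [hit])]
    · rfl
  simp only [existsAlternatingSnoc, PFormula.realize_exs, Formula.realize_relabel, hglue,
    realize_alternatingAnd]
  exact ⟨fun ⟨h, hh⟩ => ⟨glue h, hglue_snoc h, hh⟩,
    fun ⟨H, hH, hh⟩ => ⟨fun q => H q.1 q.2, by rwa [hglue_eq H hH]⟩⟩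

variable (F : ℕ → Fin d → M)

/-- A member of the Ehrenfeucht–Mostowski type of `F`, over an initial segment of length at
least `t`. -/
structure EMFormula (L : FirstOrder.Language.{u, u}) [L.Structure M] (F : ℕ → Fin d → M)
    (t : ℕ) where
  len : ℕ
  formula : L.Formula (Fin len × Fin d)
  le_len : t ≤ len
  realize : formula.Realize fun q => F q.1 q.2

instance (t : ℕ) : Nonempty (EMFormula L F t) :=
  ⟨⟨t, ⊤, le_rfl, Formula.realize_top.2 trivial⟩⟩

variable {F} in
theorem EMFormula.exists_refinement {t : ℕ} (χ₁ χ₂ : EMFormula L F t) :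
    ∃ (χ : EMFormula L F t) (h₁ : χ₁.len ≤ χ.len) (h₂ : χ₂.len ≤ χ.len),
      ∀ H : Fin χ.len → Fin d → M, χ.formula.Realize (fun q => H q.1 q.2) →
        χ₁.formula.Realize (fun q => (H ∘ Fin.castLE h₁) q.1 q.2) ∧
          χ₂.formula.Realize fun q => (H ∘ Fin.castLE h₂) q.1 q.2 := by
  have h₁ := le_max_left χ₁.len χ₂.len
  have h₂ := le_max_right χ₁.len χ₂.len
  refine ⟨⟨max χ₁.len χ₂.len, χ₁.formula.relabel (Prod.map (Fin.castLE h₁) id) ⊓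
    χ₂.formula.relabel (Prod.map (Fin.castLE h₂) id), χ₁.le_len.trans h₁, ?_⟩, h₁, h₂, ?_⟩
  · simpa only [Formula.realize_inf, Formula.realize_relabel] using ⟨χ₁.realize, χ₂.realize⟩
  · intro H hH
    simp only [Formula.realize_inf, Formula.realize_relabel] at hH
    exact hH

def ExtendsAlternating (a : Fin m → M) (t : ℕ) (v : Fin t → Fin d → M) : Prop :=
  ∀ (K : ℕ) (hK : t ≤ K) (χ : L.Formula (Fin K × Fin d)), χ.Realize (fun q => F q.1 q.2) →
    ∃ H : Fin K → Fin d → M, H ∘ Fin.castLE hK = v ∧ IsAlternating ψ a H ∧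
      χ.Realize fun q => H q.1 q.2

variable {ψ F}

theorem ExtendsAlternating.isAlternating_and_realize {a : Fin m → M} {t : ℕ}
    {v : Fin t → Fin d → M} (h : ExtendsAlternating ψ F a t v) (χ : L.Formula (Fin t × Fin d))
    (hχ : χ.Realize fun q => F q.1 q.2) :
    IsAlternating ψ a v ∧ χ.Realize fun q => v q.1 q.2 := by
  obtain ⟨H, hHv, hH⟩ := h t le_rfl χ hχ
  rw [Fin.castLE_rfl, Function.comp_id] at hHv
  exact hHv ▸ hH

theorem exists_extendsAlternating_zero (hM : IsMonster L M)
    (halt : ∀ k, ∃ a : Fin m → M, ∀ i < k,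
      ψ.Realize (Sum.elim a (F (2 * i))) ∧ ¬ ψ.Realize (Sum.elim a (F (2 * i + 1)))) :
    ∃ a, ExtendsAlternating ψ F a 0 Fin.elim0 := by
  have hdir : Directed (· ⊇ ·) fun χ : EMFormula L F 0 =>
      {a : Fin m → M | (existsAlternating ψ χ.formula).Realize a} := by
    intro χ₁ χ₂
    obtain ⟨χ, h₁, h₂, hχ⟩ := χ₁.exists_refinement χ₂
    refine ⟨χ, fun a ha => ?_, fun a ha => ?_⟩ <;>
      obtain ⟨H, hHa, hHχ⟩ := realize_existsAlternating.1 ha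
    · exact realize_existsAlternating.2 ⟨_, hHa.comp_castLE h₁, (hχ H hHχ).1⟩
    · exact realize_existsAlternating.2 ⟨_, hHa.comp_castLE h₂, (hχ H hHχ).2⟩
  have hsat (χ : EMFormula L F 0) : ∃ a : Fin m → M, (existsAlternating ψ χ.formula).Realize a := by
    obtain ⟨a, ha⟩ := halt χ.len
    refine ⟨a, realize_existsAlternating.2 ⟨fun i => F i, fun i => ?_, χ.realize⟩⟩
    obtain ⟨q, hq | hq⟩ := Nat.even_or_odd' i
    · have := (ha q (by omega)).1
      simp only [hq] at this ⊢
      simpa using this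
    · have := (ha q (by omega)).2
      simp only [hq] at this ⊢
      simpa [Nat.even_add_one] using this
  obtain ⟨a, ha⟩ := hM.exists_realize_of_directed Set.finite_empty
    (fun _ => PFormula.exs_over _ finZeroElim) hdir hsat
  refine ⟨a, fun K hK χ hχ => ?_⟩
  obtain ⟨H, hH⟩ := realize_existsAlternating.1 (ha ⟨K, χ, hK, hχ⟩)
  exact ⟨H, funext finZeroElim, hH⟩

theorem ExtendsAlternating.exists_snoc (hM : IsMonster L M) {a : Fin m → M} {t : ℕ}
    {v : Fin t → Fin d → M} (h : ExtendsAlternating ψ F a t v) :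
    ∃ y, ExtendsAlternating ψ F a (t + 1) (Fin.snoc v y) := by
  have hdir : Directed (· ⊇ ·) fun χ : EMFormula L F (t + 1) =>
      {y | (existsAlternatingSnoc ψ χ.formula a v).Realize y} := by
    intro χ₁ χ₂
    obtain ⟨χ, h₁, h₂, hχ⟩ := χ₁.exists_refinement χ₂
    refine ⟨χ, fun y hy => ?_, fun y hy => ?_⟩ <;>
      obtain ⟨H, hHv, hHa, hHχ⟩ := (realize_existsAlternatingSnoc χ.le_len).1 hy
    · refine (realize_existsAlternatingSnoc χ₁.le_len).2
        ⟨_, ?_, hHa.comp_castLE h₁, (hχ H hHχ).1⟩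
      rw [Function.comp_assoc, Fin.castLE_comp_castLE, hHv]
    · refine (realize_existsAlternatingSnoc χ₂.le_len).2
        ⟨_, ?_, hHa.comp_castLE h₂, (hχ H hHχ).2⟩
      rw [Function.comp_assoc, Fin.castLE_comp_castLE, hHv]
  have hsat (χ : EMFormula L F (t + 1)) :
      ∃ y, (existsAlternatingSnoc ψ χ.formula a v).Realize y := by
    obtain ⟨H, hHv, hH⟩ := h χ.len (Nat.le_of_succ_le χ.le_len) χ.formula χ.realize
    refine ⟨H ⟨t, χ.le_len⟩, (realize_existsAlternatingSnoc χ.le_len).2 ⟨H, ?_, hH⟩⟩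
    rw [← hHv]
    funext i
    induction i using Fin.lastCases <;>
      simp only [Function.comp_apply, Fin.snoc_last, Fin.snoc_castSucc] <;> rfl
  obtain ⟨y, hy⟩ := hM.exists_realize_of_directed
    (Set.finite_range (Sum.elim a fun p : Fin t × Fin d => v p.1 p.2))
    (fun _ => PFormula.exs_over _ Set.mem_range_self) hdir hsat
  exact ⟨y, fun K hK χ hχ => (realize_existsAlternatingSnoc hK).1 (hy ⟨K, χ, hK, hχ⟩)⟩

theorem exists_alternating_indiscernible (hM : IsMonster L M) (hF : IndiscTupleSeqOver L ∅ F)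
    (halt : ∀ k, ∃ a : Fin m → M, ∀ i < k,
      ψ.Realize (Sum.elim a (F (2 * i))) ∧ ¬ ψ.Realize (Sum.elim a (F (2 * i + 1)))) :
    ∃ (a : Fin m → M) (H : ℕ → Fin d → M), IndiscTupleSeqOver L ∅ H ∧
      ∀ i, ψ.Realize (Sum.elim a (H i)) ↔ Even i := by
  obtain ⟨a, ha⟩ := exists_extendsAlternating_zero hM halt
  obtain ⟨H, hH⟩ := exists_seq_of_forall_snoc ha fun t v hv => hv.exists_snoc hM
  exact ⟨a, H, hF.of_forall_realize fun K χ hχ => ((hH K).isAlternating_and_realize χ hχ).2,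
    fun i => ((hH (i + 1)).isAlternating_and_realize ⊤ (Formula.realize_top.2 trivial)).1
      (Fin.last i)⟩

theorem IsNIP.not_forall_exists_alternating (hNIP : IsNIP L M) (hM : IsMonster L M)
    (hF : IndiscTupleSeqOver L ∅ F) (ψ : L.Formula (Fin m ⊕ Fin d)) :
    ¬ ∀ k, ∃ a : Fin m → M, ∀ i < k,
      ψ.Realize (Sum.elim a (F (2 * i))) ∧ ¬ ψ.Realize (Sum.elim a (F (2 * i + 1))) := by
  intro halt
  obtain ⟨a, H, hH, haH⟩ := exists_alternating_indiscernible hM hF halt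
  have hswap : ∀ i, (ψ.relabel Sum.swap).Realize (Sum.elim (H i) a) ↔ Even i := fun i => by
    rw [Formula.realize_relabel, Sum.elim_swap]
    exact haH i
  refine hNIP d m (ψ.relabel Sum.swap) H a hH ⟨?_, ?_⟩ <;> simp only [hswap]
  · exact Set.infinite_of_forall_exists_gt fun i => ⟨2 * i + 2, ⟨i + 1, by ring⟩, by omega⟩
  · exact Set.infinite_of_forall_exists_gt fun i => ⟨2 * i + 1, by simp, by omega⟩

end Alternation

section Forking

variable {m n : ℕ} {A : Set M}

theorem IndiscTupleSeqOver.divides_splitting (hNIP : IsNIP L M) (hM : IsMonster L M)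
    {f : ℕ → Fin n → M} (hf : IndiscTupleSeqOver L A f) {e₀ e₁ : Fin 2} (he : e₀ ≠ e₁)
    (φ : L.Formula (Fin m ⊕ Fin n)) :
    (PFormula.splitting φ (f e₀) (f e₁)).Divides A := by
  let g : ℕ → Fin (n + n) → M := fun t => Fin.append (f (2 * t + e₀)) (f (2 * t + e₁))
  have hg : IndiscTupleSeqOver L A g := by
    convert hf.blocks (Fin.append (fun j => (e₀, j)) fun j => (e₁, j)) using 1
    funext t j
    refine Fin.addCases (fun j => ?_) (fun j => ?_) j
    · simp only [g, Fin.append_left]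
    · simp only [g, Fin.append_right]
  -- if every initial segment were consistent, `φ` would alternate along `f` without bound
  obtain ⟨k, hk⟩ : ∃ k, ¬ ∃ a : Fin m → M, ∀ i < k,
      (PFormula.splittingFormula φ).Realize (Sum.elim a (g i)) := by
    by_contra! hall
    simp only [g, PFormula.realize_splittingFormula] at hall
    have hf' := hf.mono (Set.empty_subset A)
    fin_cases e₀ <;> fin_cases e₁
    · exact he rfl
    · exact hNIP.not_forall_exists_alternating hM hf' φ (by simpa using hall)
    · exact hNIP.not_forall_exists_alternating hM hf' (∼φ) (by simpa [and_comm] using hall)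
    · exact he rfl
  have := PFormula.divides_of_indiscernible hg _ k.succ_pos
    fun ⟨a, ha⟩ => hk ⟨a, fun i hi => ha i (by omega)⟩
  have h0 : g 0 = Fin.append (f e₀) (f e₁) := by simp [g]
  rwa [h0] at this

theorem LascarDistOne.divides_splitting (hNIP : IsNIP L M) (hM : IsMonster L M)
    {u v : Fin n → M} (h : LascarDistOne L A u v) (φ : L.Formula (Fin m ⊕ Fin n)) :
    (PFormula.splitting φ u v).Divides A := by
  rcases h.eq_or_exists_zero_one with rfl | ⟨f, hf, ⟨rfl, rfl⟩ | ⟨rfl, rfl⟩⟩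
  · refine PFormula.divides_of_indiscernible (indiscTupleSeqOver_const _) _ one_pos ?_
    rintro ⟨a, ha⟩
    have := PFormula.realize_splittingFormula.1 (ha 0 one_pos)
    exact this.2 this.1
  · exact hf.divides_splitting hNIP hM (e₀ := 0) (e₁ := 1) (by decide) φ
  · exact hf.divides_splitting hNIP hM (e₀ := 1) (e₁ := 0) (by decide) φ

end Forking

theorem lascar_splitting_implies_forking_general
    (hM : IsMonster L M) (hNIP : IsNIP L M) {m : ℕ}
    (A B : Set M)
    (p : Set (PFormula L M m))
    (hls : LascarSplitsOver p B A) :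
    ForksOver p A := by
  classical
  obtain ⟨n, b, c, φ, -, -, hbc, hbp, hcp⟩ := hls
  obtain ⟨l, hl, hcross⟩ := Relation.ReflTransGen.exists_crossing_steps hbc
  refine ⟨l.length, fun j => .splitting φ l[j].1 l[j].2,
    fun j => (hl _ (List.getElem_mem _)).divides_splitting hNIP hM φ,
    {⟨n, φ, b⟩, PFormula.not ⟨n, φ, c⟩}, by simp [Set.insert_subset_iff, hbp, hcp], fun a ha => ?_⟩
  obtain ⟨e, he, hcr⟩ := hcross (fun x => φ.Realize (Sum.elim a x))
    (ha _ (Finset.mem_insert_self _ _))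
    (Formula.realize_not.1 (ha _ (Finset.mem_insert_of_mem (Finset.mem_singleton_self _))))
  obtain ⟨j, hj, rfl⟩ := List.getElem_of_mem he
  exact ⟨⟨j, hj⟩, PFormula.realize_splitting.2 hcr⟩

/-- In an NIP theory, if a type `p ∈ S(B)` Lascar-splits over `A ⊆ B`,
then `p` forks over `A`. -/
theorem lascar_splitting_implies_forking
    (hM : IsMonster L M) (hNIP : IsNIP L M) {m : ℕ}
    (A B : Set M) (hAB : A ⊆ B)
    (p : Set (PFormula L M m)) (hp : IsTypeOver p B)
    (hls : LascarSplitsOver p B A) :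
    ForksOver p A :=
  lascar_splitting_implies_forking_general hM hNIP A B p hls
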